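/- Let τ₁ ∈ ℝ and C ≥ 0, and let Ξ, d, s : [τ₁, ∞) → ℝ be functions such that Ξ is differentiable, d and s are continuous, d(t) ≥ 0 and |s(t)| ≤ C·d(t) for all t ≥ τ₁, and Ξ'(t) = −d(t)·Ξ(t) + s(t) for all t ≥ τ₁. Then |Ξ(τ)| ≤ C + |Ξ(τ₁)| for all τ ≥ τ₁. -/

import Mathlib

/-! Where `Ξ ≥ M ≥ C` the damping dominates the source, `-d Ξ + s ≤ d (C - M) ≤ 0`, so no level
`M ≥ C` above the initial value can ever be crossed upwards; with `M = C + |Ξ τ₁|`, applied to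
`Ξ` and `-Ξ`, this bounds `|Ξ|`. -/

open Set Filter Topology

theorem image_le_of_deriv_nonpos_where_ge {f f' : ℝ → ℝ} {a M : ℝ}
    (hf : ∀ x, a ≤ x → HasDerivWithinAt f (f' x) (Ici a) x) (ha : f a ≤ M)
    (hM : ∀ x, a ≤ x → M ≤ f x → f' x ≤ 0) :
    ∀ x, a ≤ x → f x ≤ M := by
  intro x hx
  -- Barrier `M + ε (y - a)`: at a contact point `f y ≥ M`, so `f' y ≤ 0 < ε`.
  have barrier : ∀ ε > 0, f x ≤ M + ε * (x - a) := by
    intro ε hε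
    refine image_le_of_deriv_right_lt_deriv_boundary (B := fun y => M + ε * (y - a))
      (fun y hy => (hf y hy.1).continuousWithinAt.mono Icc_subset_Ici_self)
      (fun y hy => (hf y hy.1).mono (Ici_subset_Ici.2 hy.1)) (by simpa using ha)
      (fun y => by simpa using ((hasDerivAt_id y).sub_const a).const_mul ε) ?_ ⟨hx, le_rfl⟩
    intro y hy hcontact
    have hMy : M ≤ f y := hcontact ▸ le_add_of_nonneg_right (mul_nonneg hε.le (sub_nonneg.2 hy.1))
    exact (hM y hy.1 hMy).trans_lt hε
  have hlim : Tendsto (fun ε => M + ε * (x - a)) (𝓝[>] 0) (𝓝 M) :=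
    tendsto_nhdsWithin_of_tendsto_nhds <|
      (show Continuous fun ε => M + ε * (x - a) by fun_prop).tendsto' 0 M (by simp)
  exact ge_of_tendsto hlim (eventually_nhdsWithin_of_forall barrier)

theorem damped_le_of_source_le {Ξ d s : ℝ → ℝ} {τ₁ C M : ℝ}
    (hΞ : ∀ t, τ₁ ≤ t → HasDerivWithinAt Ξ (-(d t) * Ξ t + s t) (Ici τ₁) t)
    (hd0 : ∀ t, τ₁ ≤ t → 0 ≤ d t) (hsC : ∀ t, τ₁ ≤ t → s t ≤ C * d t)
    (hCM : C ≤ M) (h₀ : Ξ τ₁ ≤ M) :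
    ∀ τ, τ₁ ≤ τ → Ξ τ ≤ M :=
  image_le_of_deriv_nonpos_where_ge hΞ h₀ fun t ht hMt => by
    nlinarith [hd0 t ht, hsC t ht, mul_le_mul_of_nonneg_left (hCM.trans hMt) (hd0 t ht)]

theorem damped_transport_duhamel_bound
    (τ₁ C : ℝ) (hC : 0 ≤ C) (Ξ d s : ℝ → ℝ)
    (hΞ : ∀ t, τ₁ ≤ t → HasDerivWithinAt Ξ (-(d t) * Ξ t + s t) (Set.Ici τ₁) t)
    (hd0 : ∀ t, τ₁ ≤ t → 0 ≤ d t)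
    (hsC : ∀ t, τ₁ ≤ t → |s t| ≤ C * d t) :
    ∀ τ, τ₁ ≤ τ → |Ξ τ| ≤ C + |Ξ τ₁| := by
  intro τ hτ
  have hCM : C ≤ C + |Ξ τ₁| := le_add_of_nonneg_right (abs_nonneg _)
  have hΞneg : ∀ t, τ₁ ≤ t →
      HasDerivWithinAt (fun t => -Ξ t) (-(d t) * -Ξ t + -s t) (Ici τ₁) t :=
    fun t ht => (hΞ t ht).neg.congr_deriv (by ring)
  have upper : Ξ τ ≤ C + |Ξ τ₁| :=
    damped_le_of_source_le hΞ hd0 (fun t ht => (le_abs_self _).trans (hsC t ht)) hCM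
      ((le_abs_self _).trans (le_add_of_nonneg_left hC)) τ hτ
  have lower : -Ξ τ ≤ C + |Ξ τ₁| :=
    damped_le_of_source_le hΞneg hd0 (fun t ht => (neg_le_abs _).trans (hsC t ht)) hCM
      ((neg_le_abs _).trans (le_add_of_nonneg_left hC)) τ hτ
  exact abs_le.2 ⟨by linarith, upper⟩
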